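/- A closed type S (not containing the type constant O) is an output type if and only if for every normal λ-term t and all types A₁, …, A_r ending in O, the judgment x₁ : A₁, …, x_r : A_r ⊢_F t : S implies x_i ∉ Fv(t) for every 1 ≤ i ≤ r. -/

import Mathlib

/-!
Common development: pure λ-calculus in de Bruijn notation, β-reduction,
weak head reduction, types of system F (with type constants), the typing
systems F, F₀ (F without (∀e)) and the simple system S, saturated sets and
interpretations, and the notions of input / output / data types, following
Farkh-Nour, "Les types de données syntaxiques du système F".
-/

namespace FarkhNour

/-- Pure λ-terms, in de Bruijn notation. -/
inductive Trm : Type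
  | var : ℕ → Trm
  | app : Trm → Trm → Trm
  | lam : Trm → Trm

/-- Lift (shift) by `d` the free variables of a term, starting at index `k`. -/
def liftTrm (d : ℕ) : ℕ → Trm → Trm
  | k, .var n => if n < k then .var n else .var (n + d)
  | k, .app a b => .app (liftTrm d k a) (liftTrm d k b)
  | k, .lam a => .lam (liftTrm d (k + 1) a)

/-- β-substitution `t[u/k]` (the binder for `k` is consumed: variables above `k`
are decremented), as used in the β-reduction rule. -/
def substTrm : Trm → ℕ → Trm → Trm
  | .var n, k, u => if n < k then .var n else if n = k then liftTrm k 0 u else .var (n - 1)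
  | .app a b, k, u => .app (substTrm a k u) (substTrm b k u)
  | .lam a, k, u => .lam (substTrm a (k + 1) u)

/-- Named-style capture-avoiding substitution `t[u/x]` of the term `u` for the
free variable `x` of `t` : the other free variables are left unchanged. -/
def replaceVar : Trm → ℕ → Trm → Trm
  | .var n, k, u => if n = k then u else .var n
  | .app a b, k, u => .app (replaceVar a k u) (replaceVar b k u)
  | .lam a, k, u => .lam (replaceVar a (k + 1) (liftTrm 1 0 u))

/-- Lifting of a parallel substitution under a binder. -/
def liftSub (σ : ℕ → Trm) : ℕ → Trm
  | 0 => .var 0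
  | n + 1 => liftTrm 1 0 (σ n)

/-- Simultaneous (parallel) capture-avoiding substitution. -/
def msubst (σ : ℕ → Trm) : Trm → Trm
  | .var n => σ n
  | .app a b => .app (msubst σ a) (msubst σ b)
  | .lam a => .lam (msubst (liftSub σ) a)

/-- One step of β-reduction. -/
inductive BetaStep : Trm → Trm → Prop
  | beta (t u : Trm) : BetaStep (.app (.lam t) u) (substTrm t 0 u)
  | appL {t t' : Trm} (u : Trm) : BetaStep t t' → BetaStep (.app t u) (.app t' u)
  | appR (t : Trm) {u u' : Trm} : BetaStep u u' → BetaStep (.app t u) (.app t u')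
  | lam {t t' : Trm} : BetaStep t t' → BetaStep (.lam t) (.lam t')

/-- Many-step β-reduction `t →β t'`. -/
def BetaRed : Trm → Trm → Prop := Relation.ReflTransGen BetaStep

/-- β-equivalence `t ≃β t'`. -/
def BetaEq : Trm → Trm → Prop := Relation.EqvGen BetaStep

/-- A term is normal iff no β-reduction step applies to it. -/
def IsNormal (t : Trm) : Prop := ∀ u, ¬ BetaStep t u

/-- `FreeIn k t` : the variable (de Bruijn index) `k` occurs free in `t`. -/
def FreeIn : ℕ → Trm → Prop
  | k, .var n => n = k
  | k, .app a b => FreeIn k a ∨ FreeIn k b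
  | k, .lam a => FreeIn (k + 1) a

/-- A closed term. -/
def TrmClosed (t : Trm) : Prop := ∀ k, ¬ FreeIn k t

/-- One step of weak head reduction. -/
inductive WHStep : Trm → Trm → Prop
  | beta (t u : Trm) : WHStep (.app (.lam t) u) (substTrm t 0 u)
  | app {t t' : Trm} (u : Trm) : WHStep t t' → WHStep (.app t u) (.app t' u)

/-- Weak head reduction `t ≻_f t'`. -/
def WHRed : Trm → Trm → Prop := Relation.ReflTransGen WHStep

/-- Types of system F, in de Bruijn notation, with type constants
(the constant `0` is the distinguished constant `O`, the constant `1` is `⊥`). -/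
inductive Ty : Type
  | var : ℕ → Ty
  | const : ℕ → Ty
  | arr : Ty → Ty → Ty
  | all : Ty → Ty

/-- The distinguished type constant `O`. -/
def tyO : Ty := .const 0

/-- The distinguished type constant `⊥`. -/
def tyBot : Ty := .const 1

/-- Lift (shift) by `d` the free type variables, starting at index `k`. -/
def liftTy (d : ℕ) : ℕ → Ty → Ty
  | k, .var n => if n < k then .var n else .var (n + d)
  | _, .const c => .const c
  | k, .arr a b => .arr (liftTy d k a) (liftTy d k b)
  | k, .all a => .all (liftTy d (k + 1) a)

/-- Capture-avoiding type substitution `A[G/k]`. -/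
def substTy : Ty → ℕ → Ty → Ty
  | .var n, k, G => if n < k then .var n else if n = k then liftTy k 0 G else .var (n - 1)
  | .const c, _, _ => .const c
  | .arr a b, k, G => .arr (substTy a k G) (substTy b k G)
  | .all a, k, G => .all (substTy a (k + 1) G)

/-- `TyFreeIn k A` : the type variable `k` occurs free in `A`. -/
def TyFreeIn : ℕ → Ty → Prop
  | k, .var n => n = k
  | _, .const _ => False
  | k, .arr a b => TyFreeIn k a ∨ TyFreeIn k b
  | k, .all a => TyFreeIn (k + 1) a

/-- Boolean version of `TyFreeIn`. -/
def tyFreeInB : ℕ → Ty → Bool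
  | k, .var n => n == k
  | _, .const _ => false
  | k, .arr a b => tyFreeInB k a || tyFreeInB k b
  | k, .all a => tyFreeInB (k + 1) a

/-- A closed type. -/
def TyClosed (A : Ty) : Prop := ∀ k, ¬ TyFreeIn k A

/-- `ContainsConst c A` : the type constant `c` occurs in `A`. -/
def ContainsConst : ℕ → Ty → Prop
  | _, .var _ => False
  | c, .const c' => c' = c
  | c, .arr a b => ContainsConst c a ∨ ContainsConst c b
  | c, .all a => ContainsConst c a

/-- The typing judgment `Γ ⊢_F t : A` of system F, with rules
(ax), (→i), (→e), (∀i), (∀e). -/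
inductive TypF : List Ty → Trm → Ty → Prop
  | var (Γ : List Ty) (n : ℕ) (A : Ty) : Γ[n]? = some A → TypF Γ (.var n) A
  | abs {Γ : List Ty} {t : Trm} {B C : Ty} :
      TypF (B :: Γ) t C → TypF Γ (.lam t) (.arr B C)
  | app {Γ : List Ty} {u v : Trm} {B C : Ty} :
      TypF Γ u (.arr B C) → TypF Γ v B → TypF Γ (.app u v) C
  | allI {Γ : List Ty} {t : Trm} {A : Ty} :
      TypF (Γ.map (liftTy 1 0)) t A → TypF Γ t (.all A)
  | allE {Γ : List Ty} {t : Trm} {A : Ty} (G : Ty) :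
      TypF Γ t (.all A) → TypF Γ t (substTy A 0 G)

/-- The typing judgment `Γ ⊢_{F₀} t : A` of system F₀, i.e. system F
without the rule (∀e). -/
inductive TypF0 : List Ty → Trm → Ty → Prop
  | var (Γ : List Ty) (n : ℕ) (A : Ty) : Γ[n]? = some A → TypF0 Γ (.var n) A
  | abs {Γ : List Ty} {t : Trm} {B C : Ty} :
      TypF0 (B :: Γ) t C → TypF0 Γ (.lam t) (.arr B C)
  | app {Γ : List Ty} {u v : Trm} {B C : Ty} :
      TypF0 Γ u (.arr B C) → TypF0 Γ v B → TypF0 Γ (.app u v) C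
  | allI {Γ : List Ty} {t : Trm} {A : Ty} :
      TypF0 (Γ.map (liftTy 1 0)) t A → TypF0 Γ t (.all A)

/-- The typing judgment `Γ ⊢_S t : A` of the simple type system S,
with rules (ax), (→i), (→e) only. -/
inductive TypS : List Ty → Trm → Ty → Prop
  | var (Γ : List Ty) (n : ℕ) (A : Ty) : Γ[n]? = some A → TypS Γ (.var n) A
  | abs {Γ : List Ty} {t : Trm} {B C : Ty} :
      TypS (B :: Γ) t C → TypS Γ (.lam t) (.arr B C)
  | app {Γ : List Ty} {u v : Trm} {B C : Ty} :
      TypS Γ u (.arr B C) → TypS Γ v B → TypS Γ (.app u v) C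

/-- Quantifier-free types (types of the simple type system S). -/
def QFree : Ty → Prop
  | .var _ => True
  | .const _ => True
  | .arr a b => QFree a ∧ QFree b
  | .all _ => False

/-- An input type : a closed type all of whose normal inhabitants are
typable in system F₀. -/
def IsInputType (E : Ty) : Prop :=
  TyClosed E ∧ ∀ t : Trm, IsNormal t → TypF [] t E → TypF0 [] t E

/-- An output type : a closed type `S` not containing the constant `O` such
that for every normal term `t`, if `α : O ⊢_F t : S` then `α ∉ Fv(t)`. -/
def IsOutputType (S : Ty) : Prop :=
  TyClosed S ∧ ¬ ContainsConst 0 S ∧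
    ∀ t : Trm, IsNormal t → TypF [tyO] t S → ¬ FreeIn 0 t

/-- A syntactical data type : a closed type which is both input and output. -/
def IsSyntacticalDataType (D : Ty) : Prop := IsInputType D ∧ IsOutputType D

mutual
  /-- The ∀⁺ types (positive quantifiers). -/
  inductive PosTy : Ty → Prop
    | var (n : ℕ) : PosTy (.var n)
    | arr {B A : Ty} : NegTy B → PosTy A → PosTy (.arr B A)
    | all {A : Ty} : PosTy A → TyFreeIn 0 A → PosTy (.all A)
  /-- The ∀⁻ types (negative quantifiers). -/
  inductive NegTy : Ty → Prop
    | var (n : ℕ) : NegTy (.var n)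
    | arr {B A : Ty} : PosTy B → NegTy A → NegTy (.arr B A)
end

/-- `EndsInConst c A` : the type `A` ends in the type constant `c`. -/
inductive EndsInConst : ℕ → Ty → Prop
  | base (c : ℕ) : EndsInConst c (.const c)
  | arr {c : ℕ} {A : Ty} (B : Ty) : EndsInConst c A → EndsInConst c (.arr B A)
  | all {c : ℕ} {A : Ty} : EndsInConst c A → EndsInConst c (.all A)

/-- `EndsInVar k A` : the type `A` ends in the type variable `k`
(crossing a quantifier ∀X with X ≠ the variable is allowed). -/
inductive EndsInVar : ℕ → Ty → Prop
  | base (k : ℕ) : EndsInVar k (.var k)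
  | arr {k : ℕ} {A : Ty} (B : Ty) : EndsInVar k A → EndsInVar k (.arr B A)
  | all {k : ℕ} {A : Ty} : EndsInVar (k + 1) A → EndsInVar k (.all A)

/-- The side condition of the restricted rule (∀e)_F : the body `A` of `∀X A`
(the variable X having index `k`) is of the form
`∀X₀(A₁ → ∀X₁(A₂ → … → ∀X_{n-1}(A_n → ∀X_n Y)…))` with `Y = X` or one of the
`A_i` ending in `X`. -/
inductive FFForm : ℕ → Ty → Prop
  | base (k : ℕ) : FFForm k (.var k)
  | all {k : ℕ} {A : Ty} : FFForm (k + 1) A → FFForm k (.all A)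
  | arrTail {k : ℕ} {C : Ty} (B : Ty) : FFForm k C → FFForm k (.arr B C)
  | arrHit {k : ℕ} {B C : Ty} : EndsInVar k B → (∃ j, EndsInVar j C) →
      FFForm k (.arr B C)

/-- The typing judgment of system F_F : system F where the rule (∀e) is
replaced by the restricted rule (∀e)_F. -/
inductive TypFF : List Ty → Trm → Ty → Prop
  | var (Γ : List Ty) (n : ℕ) (A : Ty) : Γ[n]? = some A → TypFF Γ (.var n) A
  | abs {Γ : List Ty} {t : Trm} {B C : Ty} :
      TypFF (B :: Γ) t C → TypFF Γ (.lam t) (.arr B C)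
  | app {Γ : List Ty} {u v : Trm} {B C : Ty} :
      TypFF Γ u (.arr B C) → TypFF Γ v B → TypFF Γ (.app u v) C
  | allI {Γ : List Ty} {t : Trm} {A : Ty} :
      TypFF (Γ.map (liftTy 1 0)) t A → TypFF Γ t (.all A)
  | allE {Γ : List Ty} {t : Trm} {A : Ty} (G : Ty) :
      FFForm 0 A → TypFF Γ t (.all A) → TypFF Γ t (substTy A 0 G)

/-- An output type of system F_F. -/
def IsOutputTypeFF (S : Ty) : Prop :=
  TyClosed S ∧ ¬ ContainsConst 0 S ∧
    ∀ t : Trm, IsNormal t → TypFF [tyO] t S → ¬ FreeIn 0 t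

/-- Saturated sets of λ-terms. -/
def Saturated (G : Set Trm) : Prop := ∀ t u : Trm, WHRed t u → u ∈ G → t ∈ G

/-- `G → G'` on sets of λ-terms. -/
def SetArr (G G' : Set Trm) : Set Trm := {u : Trm | ∀ t ∈ G, Trm.app u t ∈ G'}

/-- Extension of an interpretation by a set for the (de Bruijn) variable 0. -/
def consEnv (G : Set Trm) (I : ℕ → Set Trm) : ℕ → Set Trm
  | 0 => G
  | n + 1 => I n

/-- The value `|A|_I` of a type in an interpretation (`C` interprets the
type constants, `I` the type variables). -/
def TyVal (C : ℕ → Set Trm) : Ty → (ℕ → Set Trm) → Set Trm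
  | .var n, I => I n
  | .const c, _ => C c
  | .arr a b, I => SetArr (TyVal C a I) (TyVal C b I)
  | .all a, I => {t : Trm | ∀ G : Set Trm, Saturated G → t ∈ TyVal C a (consEnv G I)}

/-- `|A|` : the intersection of the values of `A` under all interpretations
by saturated sets. -/
def TyGlobal (A : Ty) : Set Trm :=
  {t : Trm | ∀ C I : ℕ → Set Trm, (∀ c, Saturated (C c)) → (∀ n, Saturated (I n)) →
    t ∈ TyVal C A I}

/-- A data type in Krivine's sense : a closed type `A` with `|A| ≠ ∅` such that
every term of `|A|` β-reduces to a closed term. -/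
def IsDataType (A : Ty) : Prop :=
  TyClosed A ∧ TyGlobal A ≠ ∅ ∧
    ∀ t ∈ TyGlobal A, ∃ t' : Trm, BetaRed t t' ∧ TrmClosed t'

/-- The product type `A ∧ B = ∀X((A → (B → X)) → X)` (X fresh). -/
def tyAnd (A B : Ty) : Ty :=
  .all (.arr (.arr (liftTy 1 0 A) (.arr (liftTy 1 0 B) (.var 0))) (.var 0))

/-- The disjoint sum type `A ∨ B = ∀X((A → X) → ((B → X) → X))` (X fresh). -/
def tyOr (A B : Ty) : Ty :=
  .all (.arr (.arr (liftTy 1 0 A) (.var 0))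
    (.arr (.arr (liftTy 1 0 B) (.var 0)) (.var 0)))

/-- The type `LA = ∀X(X → ((A → (X → X)) → X))` of lists of objects of `A`. -/
def tyList (A : Ty) : Ty :=
  .all (.arr (.var 0)
    (.arr (.arr (liftTy 1 0 A) (.arr (.var 0) (.var 0))) (.var 0)))

/-- Negation `¬A = A → ⊥`. -/
def tyNeg (A : Ty) : Ty := .arr A tyBot

/-- The Gödel translation `A*` : every atomic subformula `R` is replaced
by `¬R`. -/
def godel : Ty → Ty
  | .var n => .arr (.var n) tyBot
  | .const c => .arr (.const c) tyBot
  | .arr a b => .arr (godel a) (godel b)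
  | .all a => .all (godel a)

/-- `T` is a storage operator for the pair of types `(E, S)`. -/
def IsStorageOpPair (T : Trm) (E S : Ty) : Prop :=
  TrmClosed T ∧
    ∀ t : Trm, TypF [] t E →
      ∃ τ τ' : Trm, BetaEq τ τ' ∧ TypF [] τ' S ∧
        ∀ θ : Trm, BetaEq θ t →
          ∀ f : ℕ, ¬ FreeIn f θ → ¬ FreeIn f τ →
            ∃ σ : ℕ → Trm,
              WHRed (.app (.app T θ) (.var f)) (.app (.var f) (msubst σ τ))

/-- `T` is a storage operator for the type `D`. -/
def IsStorageOp (T : Trm) (D : Ty) : Prop := IsStorageOpPair T D D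

/-- The term `λx₁…λxₙ.α` (n-fold abstraction over the free variable `α`). -/
def nlam (n a : ℕ) : Trm := Trm.lam^[n] (Trm.var (a + n))

/-- The term `p_n = λx₁…λxₙλx.x`. -/
def pTrm (n : ℕ) : Trm := Trm.lam^[n] (Trm.lam (Trm.var 0))

/-- `B₁ → … → B_n → A`. -/
def mkArr (Bs : List Ty) (A : Ty) : Ty := Bs.foldr Ty.arr A

/-- The length `Lg(E)` of a type : the number of occurrences of `→` in it. -/
def Lg : Ty → ℕ
  | .var _ => 0
  | .const _ => 0
  | .arr a b => Lg a + Lg b + 1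
  | .all a => Lg a

/-- `SubtypeOf A E` : `A` is a subtype (subformula) of `E`. -/
inductive SubtypeOf : Ty → Ty → Prop
  | refl (A : Ty) : SubtypeOf A A
  | arrL {A B C : Ty} : SubtypeOf A B → SubtypeOf A (.arr B C)
  | arrR {A B C : Ty} : SubtypeOf A C → SubtypeOf A (.arr B C)
  | all {A B : Ty} : SubtypeOf A B → SubtypeOf A (.all B)

/-- `InAppPos k t` : the variable `k` occurs in application (function)
position in `t`, i.e. some subterm of `t` is of the form `(k)u`. -/
def InAppPos : ℕ → Trm → Prop
  | _, .var _ => False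
  | k, .app u v => u = .var k ∨ InAppPos k u ∨ InAppPos k v
  | k, .lam u => InAppPos (k + 1) u

/-- The simple translation `A^s` : `X^s = X`, `(B → C)^s = B^s → C^s`,
`(∀X B)^s = B^s` (the variables freed by erasing the quantifiers are collapsed
onto the type variable `0`). `d` counts the erased quantifiers. -/
def eraseTyAux : ℕ → Ty → Ty
  | d, .var n => .var (n - d)
  | _, .const c => .const c
  | d, .arr a b => .arr (eraseTyAux d a) (eraseTyAux d b)
  | d, .all a => eraseTyAux (d + 1) a

/-- The simple translation `A^s`. -/
def eraseTy : Ty → Ty := eraseTyAux 0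

/-- The identity term `λx.x`. -/
def idTrm : Trm := .lam (.var 0)

/-- The boolean `𝟙 = λxλy.x`. -/
def oneTrm : Trm := .lam (.lam (.var 1))

/-- The pair of λ-terms `(T_F, T'_F)` associated with a type `F` (the
distinguished variable `X` having de Bruijn index `k`; the term variable `α`
is the free term variable `0`):
`T_F = T'_F = λx.x` if `X ∉ Fv(F)`;
`T_X = λxλβλg.(g)xα`, `T'_X = λx.(x)α𝟙`;
`T_{C→D} = λxλy.(T_D)(x)(T'_C)y`, `T'_{C→D} = λxλy.(T'_D)(x)(T_C)y`;
`T_{∀Y B} = λx.(T_B)x`, `T'_{∀Y B} = λx.(T'_B)x`. -/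
def TTpair : ℕ → Ty → Trm × Trm
  | k, .var n =>
      if n = k then
        (.lam (.lam (.lam (.app (.app (.var 0) (.var 2)) (.var 3)))),
         .lam (.app (.app (.var 0) (.var 1)) oneTrm))
      else (idTrm, idTrm)
  | _, .const _ => (idTrm, idTrm)
  | k, .arr C D =>
      if tyFreeInB k (.arr C D) then
        (.lam (.lam (.app (liftTrm 2 0 (TTpair k D).1)
            (.app (.var 1) (.app (liftTrm 2 0 (TTpair k C).2) (.var 0))))),
         .lam (.lam (.app (liftTrm 2 0 (TTpair k D).2)
            (.app (.var 1) (.app (liftTrm 2 0 (TTpair k C).1) (.var 0))))))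
      else (idTrm, idTrm)
  | k, .all B =>
      if tyFreeInB k (.all B) then
        (.lam (.app (liftTrm 1 0 (TTpair (k + 1) B).1) (.var 0)),
         .lam (.app (liftTrm 1 0 (TTpair (k + 1) B).2) (.var 0)))
      else (idTrm, idTrm)

/-!
If `x₁ : A₁, …, x_r : A_r ⊢ t : S` with every `A_j` ending in `O`, replace each `x_j` by the
canonical inhabitant `λy₁…λy_n.α` of `A_j` (with `n` the number of arrows on the spine of
`A_j`), contracting at once the head redexes this creates. Since `t` is normal, these are the
only redexes, so the result is a normal term of type `S` in the context `α : O`, and it contains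
`α` as soon as some `x_i` occurs in `t`. The converse is the case `r = 1`, `A₁ = O`.
-/

lemma isNormal_var (n : ℕ) : IsNormal (.var n) := by
  rintro u ⟨⟩

lemma isNormal_lam_iff {t : Trm} : IsNormal (.lam t) ↔ IsNormal t :=
  ⟨fun h u hu => h _ (.lam hu), fun h u hu => by cases hu with | lam hu => exact h _ hu⟩

lemma isNormal_app_iff {u v : Trm} :
    IsNormal (.app u v) ↔ IsNormal u ∧ IsNormal v ∧ ∀ b, u ≠ .lam b := by
  refine ⟨fun h => ⟨fun w hw => h _ (.appL v hw), fun w hw => h _ (.appR u hw), ?_⟩, ?_⟩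
  · rintro b rfl
    exact h _ (.beta b v)
  · rintro ⟨hu, hv, hl⟩ w hw
    cases hw with
    | beta b _ => exact hl b rfl
    | appL _ h => exact hu _ h
    | appR _ h => exact hv _ h

lemma nlam_zero (a : ℕ) : nlam 0 a = .var a := rfl

lemma nlam_succ (n a : ℕ) : nlam (n + 1) a = .lam (nlam n (a + 1)) := by
  rw [nlam, nlam, Function.iterate_succ_apply', Nat.add_right_comm, Nat.add_assoc]

lemma isNormal_nlam (n a : ℕ) : IsNormal (nlam n a) := by
  induction n generalizing a with
  | zero => exact isNormal_var a
  | succ n ih => rw [nlam_succ, isNormal_lam_iff]; exact ih (a + 1)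

lemma freeIn_nlam (n a : ℕ) : FreeIn a (nlam n a) := by
  induction n generalizing a with
  | zero => rfl
  | succ n ih => rw [nlam_succ]; exact ih (a + 1)

lemma substTrm_nlam (n : ℕ) {a k : ℕ} (hk : k ≤ a) (v : Trm) :
    substTrm (nlam n (a + 1)) k v = nlam n a := by
  induction n generalizing a k with
  | zero => simp [nlam_zero, substTrm, show ¬ a + 1 < k by omega, show a + 1 ≠ k by omega]
  | succ n ih => simp only [nlam_succ, substTrm, ih (Nat.succ_le_succ hk)]

/-- For a type ending in `O`, the number of abstractions of its canonical inhabitant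
`λy₁…λyₙ.α`. -/
def arity : Ty → ℕ
  | .arr _ b => arity b + 1
  | .all a => arity a
  | _ => 0

lemma arity_liftTy (d : ℕ) : ∀ (k : ℕ) (A : Ty), arity (liftTy d k A) = arity A
  | k, .var n => by simp only [liftTy]; split <;> rfl
  | _, .const _ => rfl
  | k, .arr _ b => by simp only [liftTy, arity, arity_liftTy d k b]
  | k, .all a => by simp only [liftTy, arity, arity_liftTy d (k + 1) a]

namespace EndsInConst

variable {c : ℕ} {A : Ty}

lemma of_arr {B : Ty} (h : EndsInConst c (.arr B A)) : EndsInConst c A := by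
  cases h with | arr _ h => exact h

lemma of_all (h : EndsInConst c (.all A)) : EndsInConst c A := by
  cases h with | all h => exact h

lemma liftTy (h : EndsInConst c A) (d k : ℕ) : EndsInConst c (FarkhNour.liftTy d k A) := by
  induction h generalizing k with
  | base => exact .base c
  | arr B _ ih => exact .arr _ (ih k)
  | all _ ih => exact .all (ih (k + 1))

lemma substTy (h : EndsInConst c A) (k : ℕ) (G : Ty) :
    EndsInConst c (FarkhNour.substTy A k G) := by
  induction h generalizing k with
  | base => exact .base c
  | arr B _ ih => exact .arr _ (ih k)
  | all _ ih => exact .all (ih (k + 1))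

lemma arity_substTy (h : EndsInConst c A) (k : ℕ) (G : Ty) :
    arity (FarkhNour.substTy A k G) = arity A := by
  induction h generalizing k with
  | base => rfl
  | arr B _ ih => simp only [FarkhNour.substTy, arity, ih k]
  | all _ ih => simp only [FarkhNour.substTy, arity, ih (k + 1)]

end EndsInConst

lemma typF_nlam {C : Ty} (h : EndsInConst 0 C) (Δ : List Ty) :
    TypF (Δ ++ [tyO]) (nlam (arity C) Δ.length) C := by
  induction h generalizing Δ with
  | base =>
    apply TypF.var
    simp [tyO, arity]
  | arr B _ ih =>
    rw [arity, nlam_succ]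
    exact .abs (by simpa using ih (B :: Δ))
  | all _ ih =>
    apply TypF.allI
    simpa [tyO, liftTy, arity] using ih (Δ.map (liftTy 1 0))

def betaApp : Trm → Trm → Trm
  | .lam b, v => substTrm b 0 v
  | u, v => .app u v

lemma betaApp_of_not_lam {u : Trm} (h : ∀ b, u ≠ .lam b) (v : Trm) : betaApp u v = .app u v := by
  cases u with
  | lam b => exact absurd rfl (h b)
  | _ => rfl

lemma betaApp_nlam (n c : ℕ) (v : Trm) : betaApp (nlam (n + 1) c) v = nlam n c := by
  rw [nlam_succ]
  exact substTrm_nlam n (Nat.zero_le c) v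

/-- Under `c` binders, the free variable `c + j` is replaced by `nlam (ks[j]) c`, i.e. by
`λy₁…λy_{ks[j]}.α` where `α` is the variable `c`. -/
def collapse (ks : List ℕ) : ℕ → Trm → Trm
  | c, .var n => if n < c then .var n else nlam (ks.getD (n - c) 0) c
  | c, .app a b => betaApp (collapse ks c a) (collapse ks c b)
  | c, .lam a => .lam (collapse ks (c + 1) a)

section collapse

variable {ks : List ℕ}

lemma collapse_eq_nlam_of_eq_lam {t : Trm} (hn : IsNormal t) (ht : ∀ a, t ≠ .lam a) {c : ℕ}
    {b : Trm} (hb : collapse ks c t = .lam b) : ∃ n, collapse ks c t = nlam (n + 1) c := by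
  induction t generalizing b with
  | var m =>
    by_cases hm : m < c
    · simp only [collapse, if_pos hm] at hb
      cases hb
    · simp only [collapse, if_neg hm] at hb ⊢
      generalize ks.getD (m - c) 0 = n at hb ⊢
      obtain _ | n := n
      · rw [nlam_zero] at hb
        cases hb
      · exact ⟨n, rfl⟩
  | lam a => exact absurd rfl (ht a)
  | app u v ihu =>
    obtain ⟨hu, -, hul⟩ := isNormal_app_iff.mp hn
    simp only [collapse] at hb ⊢
    by_cases hlam : ∃ b', collapse ks c u = .lam b'
    · obtain ⟨b', hb'⟩ := hlam
      obtain ⟨n, hn'⟩ := ihu hu hul hb'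
      rw [hn', betaApp_nlam] at hb ⊢
      obtain _ | n := n
      · rw [nlam_zero] at hb
        cases hb
      · exact ⟨n, rfl⟩
    · rw [betaApp_of_not_lam (not_exists.mp hlam)] at hb
      cases hb

lemma isNormal_collapse {t : Trm} (hn : IsNormal t) (c : ℕ) : IsNormal (collapse ks c t) := by
  induction t generalizing c with
  | var m =>
    simp only [collapse]
    split_ifs
    exacts [isNormal_var m, isNormal_nlam _ c]
  | lam a ih => exact isNormal_lam_iff.mpr (ih (isNormal_lam_iff.mp hn) (c + 1))
  | app u v ihu ihv =>
    obtain ⟨hu, hv, hul⟩ := isNormal_app_iff.mp hn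
    simp only [collapse]
    by_cases hlam : ∃ b, collapse ks c u = .lam b
    · obtain ⟨b, hb⟩ := hlam
      obtain ⟨n, hn'⟩ := collapse_eq_nlam_of_eq_lam hu hul hb
      rw [hn', betaApp_nlam]
      exact isNormal_nlam n c
    · rw [betaApp_of_not_lam (not_exists.mp hlam)]
      exact isNormal_app_iff.mpr ⟨ihu hu c, ihv hv c, not_exists.mp hlam⟩

lemma freeIn_collapse {t : Trm} (hn : IsNormal t) {c m : ℕ} (hm : c ≤ m) (hf : FreeIn m t) :
    FreeIn c (collapse ks c t) := by
  induction t generalizing c m with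
  | var n =>
    obtain rfl : n = m := hf
    simp only [collapse, if_neg (Nat.not_lt.mpr hm)]
    exact freeIn_nlam _ c
  | lam a ih => exact ih (isNormal_lam_iff.mp hn) (Nat.succ_le_succ hm) hf
  | app u v ihu ihv =>
    obtain ⟨hu, hv, hul⟩ := isNormal_app_iff.mp hn
    simp only [collapse]
    by_cases hlam : ∃ b, collapse ks c u = .lam b
    · obtain ⟨b, hb⟩ := hlam
      obtain ⟨n, hn'⟩ := collapse_eq_nlam_of_eq_lam hu hul hb
      rw [hn', betaApp_nlam]
      exact freeIn_nlam n c
    · rw [betaApp_of_not_lam (not_exists.mp hlam)]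
      exact hf.imp (ihu hu hm) (ihv hv hm)

end collapse

lemma map_arity_map_liftTy (d k : ℕ) (Γ : List Ty) :
    (Γ.map (liftTy d k)).map arity = Γ.map arity := by
  simp [Function.comp_def, arity_liftTy]

lemma typF_collapse_var {Δ Γ : List Ty} (hΓ : ∀ A ∈ Γ, EndsInConst 0 A) {n : ℕ} {B : Ty}
    (hB : (Δ ++ Γ)[n]? = some B) :
    TypF (Δ ++ [tyO]) (collapse (Γ.map arity) Δ.length (.var n)) B ∧
      ∀ b, collapse (Γ.map arity) Δ.length (.var n) = .lam b →
        EndsInConst 0 B ∧ collapse (Γ.map arity) Δ.length (.var n) = nlam (arity B) Δ.length := by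
  by_cases hnΔ : n < Δ.length
  · simp only [collapse, if_pos hnΔ]
    exact ⟨.var _ _ _ (by rwa [List.getElem?_append_left hnΔ] at hB ⊢), fun _ h => by cases h⟩
  · rw [List.getElem?_append_right (Nat.not_lt.mp hnΔ)] at hB
    have hBO : EndsInConst 0 B := hΓ B (List.mem_of_getElem? hB)
    have hk : (Γ.map arity).getD (n - Δ.length) 0 = arity B := by
      simp [List.getD_eq_getElem?_getD, hB]
    simp only [collapse, if_neg hnΔ]
    rw [hk]
    exact ⟨typF_nlam hBO Δ, fun _ _ => ⟨hBO, rfl⟩⟩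

/-- The second conjunct is what makes the `app` case work: in a normal term, the collapse of
the function part can only be an abstraction if it is a canonical inhabitant. -/
lemma typF_collapse {Θ : List Ty} {t : Trm} {B : Ty} (h : TypF Θ t B) (hn : IsNormal t)
    {Δ Γ : List Ty} (hΘ : Θ = Δ ++ Γ) (hΓ : ∀ A ∈ Γ, EndsInConst 0 A) :
    TypF (Δ ++ [tyO]) (collapse (Γ.map arity) Δ.length t) B ∧
      ∀ b, collapse (Γ.map arity) Δ.length t = .lam b →
        (∃ a, t = .lam a) ∨
          EndsInConst 0 B ∧ collapse (Γ.map arity) Δ.length t = nlam (arity B) Δ.length := by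
  induction h generalizing Δ Γ with
  | var Θ n B hB =>
    subst hΘ
    obtain ⟨ht, hsh⟩ := typF_collapse_var hΓ hB
    exact ⟨ht, fun b hb => .inr (hsh b hb)⟩
  | abs _ ih =>
    subst hΘ
    refine ⟨.abs ?_, fun _ _ => .inl ⟨_, rfl⟩⟩
    simpa using (ih (isNormal_lam_iff.mp hn) (Δ := _ :: Δ) rfl hΓ).1
  | @app _ u v B C _ _ ihu ihv =>
    obtain ⟨hu, hv, hul⟩ := isNormal_app_iff.mp hn
    obtain ⟨htu, hshu⟩ := ihu hu hΘ hΓ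
    have htv := (ihv hv hΘ hΓ).1
    simp only [collapse]
    by_cases hlam : ∃ b, collapse (Γ.map arity) Δ.length u = .lam b
    · obtain ⟨b, hb⟩ := hlam
      obtain ⟨a, rfl⟩ | ⟨hBC, hu'⟩ := hshu b hb
      · exact absurd rfl (hul a)
      rw [hu', arity, betaApp_nlam]
      exact ⟨typF_nlam hBC.of_arr Δ, fun _ _ => .inr ⟨hBC.of_arr, rfl⟩⟩
    · rw [betaApp_of_not_lam (not_exists.mp hlam)]
      exact ⟨.app htu htv, fun _ h => by cases h⟩
  | allI _ ih =>
    subst hΘ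
    have hΓ' : ∀ A ∈ Γ.map (liftTy 1 0), EndsInConst 0 A := by
      rintro _ hA'
      obtain ⟨A, hA, rfl⟩ := List.mem_map.mp hA'
      exact (hΓ A hA).liftTy 1 0
    obtain ⟨ht, hsh⟩ := ih hn (List.map_append ..) hΓ'
    rw [map_arity_map_liftTy, List.length_map] at ht hsh
    refine ⟨.allI (by simpa [tyO, liftTy] using ht), fun b hb => ?_⟩
    obtain h | ⟨hA, h⟩ := hsh b hb
    exacts [.inl h, .inr ⟨hA.all, h⟩]
  | allE G _ ih =>
    obtain ⟨ht, hsh⟩ := ih hn hΘ hΓ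
    refine ⟨.allE G ht, fun b hb => ?_⟩
    obtain h | ⟨hA, h⟩ := hsh b hb
    · exact .inl h
    · have hA := hA.of_all
      exact .inr ⟨hA.substTy 0 G, by rw [h, hA.arity_substTy]; rfl⟩

/-- a closed type `S` not containing `O` is an output type iff
for every normal term `t` and all types `A₁, …, A_r` ending in `O`,
`x₁ : A₁, …, x_r : A_r ⊢_F t : S` implies `x_i ∉ Fv(t)` for all `1 ≤ i ≤ r`. -/
theorem output_type_characterization (S : Ty) (hC : TyClosed S)
    (hO : ¬ ContainsConst 0 S) :
    (∀ t : Trm, IsNormal t → TypF [tyO] t S → ¬ FreeIn 0 t) ↔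
      (∀ Γ : List Ty, (∀ A ∈ Γ, EndsInConst 0 A) →
        ∀ t : Trm, IsNormal t → TypF Γ t S →
          ∀ i, i < Γ.length → ¬ FreeIn i t) := by
  constructor
  · intro hout Γ hΓ t hn ht i _ hi
    have ht' := (typF_collapse ht hn (Δ := []) rfl hΓ).1
    exact hout _ (isNormal_collapse hn 0) ht' (freeIn_collapse hn (Nat.zero_le i) hi)
  · intro h t hn ht
    exact h [tyO] (by simp [tyO, EndsInConst.base]) t hn ht 0 Nat.one_pos

end FarkhNour
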